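/- arXiv:2501.00507 — 2 statements merged into one kernel-verified Lean document; each statement's English description precedes it below -/
import Mathlib

section
/- Let E be a real normed vector space, n a positive integer, q ∈ ℝⁿ, r₁,…,rₙ ≥ 0, v_obs ≥ 0, d ≥ 0 and t* ≥ 0. Suppose p : ℝⁿ → E satisfies the enclosing-radii bound at root q with radii r_j, and suppose o : [0, t*] → E is v_obs-Lipschitz with ‖p(q) − o(0)‖ ≥ d. Then for every t ∈ [0, t*] and every configuration y ∈ ℝⁿ lying in the dynamic expanded bubble at time t (i.e. Σⱼ rⱼ·|yⱼ − qⱼ| + v_obs·t ≤ d), one has ‖p(y) − o(t)‖ ≥ d − Σⱼ rⱼ·|yⱼ − qⱼ| − v_obs·t ≥ 0; in particular, if the bubble inequality is strict then p(y) ≠ o(t), so no collision between the tracked robot point and the obstacle point can occur. -/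
theorem dist_apply_zero_le_mul {X : Type*} [PseudoMetricSpace X] {o : ℝ → X} {v T t : ℝ}
    (ho : ∀ s ∈ Set.Icc (0 : ℝ) T, ∀ t ∈ Set.Icc (0 : ℝ) T, dist (o s) (o t) ≤ v * |s - t|)
    (ht : t ∈ Set.Icc (0 : ℝ) T) :
    dist (o t) (o 0) ≤ v * t := by
  have h0 : (0 : ℝ) ∈ Set.Icc (0 : ℝ) T := ⟨le_rfl, ht.1.trans ht.2⟩
  simpa only [sub_zero, abs_of_nonneg ht.1] using ho t ht 0 h0

theorem sub_sub_le_dist {X : Type*} [PseudoMetricSpace X] {x₀ y₀ x y : X} {d a b : ℝ}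
    (h₀ : d ≤ dist x₀ y₀) (hx : dist x x₀ ≤ a) (hy : dist y y₀ ≤ b) :
    d - a - b ≤ dist x y := by
  have := dist_triangle4 x₀ x y y₀
  rw [dist_comm x₀ x] at this
  linarith

theorem dynamic_expanded_bubble_safety_general
    {E : Type*} [NormedAddCommGroup E] [NormedSpace ℝ E]
    (n : ℕ) (q : Fin n → ℝ) (r : Fin n → ℝ)
    (v_obs : ℝ) (d : ℝ)
    (tstar : ℝ)
    (p : (Fin n → ℝ) → E)
    (hp : ∀ y : Fin n → ℝ, ‖p y - p q‖ ≤ ∑ j, r j * |y j - q j|)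
    (o : ℝ → E)
    (ho : ∀ s ∈ Set.Icc (0 : ℝ) tstar, ∀ t ∈ Set.Icc (0 : ℝ) tstar,
      ‖o s - o t‖ ≤ v_obs * |s - t|)
    (hinit : d ≤ ‖p q - o 0‖) :
    ∀ t ∈ Set.Icc (0 : ℝ) tstar, ∀ y : Fin n → ℝ,
      (∑ j, r j * |y j - q j|) + v_obs * t ≤ d →
      (d - (∑ j, r j * |y j - q j|) - v_obs * t ≤ ‖p y - o t‖ ∧
        0 ≤ d - (∑ j, r j * |y j - q j|) - v_obs * t) ∧
      ((∑ j, r j * |y j - q j|) + v_obs * t < d → p y ≠ o t) := by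
  intro t ht y hy
  simp only [← dist_eq_norm] at hp ho hinit ⊢
  have hclear := sub_sub_le_dist hinit (hp y) (dist_apply_zero_le_mul ho ht)
  refine ⟨⟨hclear, by linarith⟩, fun hlt hcol => ?_⟩
  rw [hcol, dist_self] at hclear
  linarith

/-- **Dynamic expanded bubble safety (single bubble).**
If `p` satisfies the enclosing-radii bound at root `q` with radii `r j`,
the obstacle point `o` is `v_obs`-Lipschitz on `[0, t*]`, and the initial
robot-obstacle distance is at least `d`, then any configuration `y` inside the
dynamic expanded bubble at time `t` keeps a distance at least
`d - Σⱼ rⱼ·|yⱼ - qⱼ| - v_obs·t ≥ 0` from the obstacle; if the bubble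
inequality is strict, no collision can occur. -/
theorem dynamic_expanded_bubble_safety
    {E : Type*} [NormedAddCommGroup E] [NormedSpace ℝ E]
    (n : ℕ) (hn : 0 < n) (q : Fin n → ℝ) (r : Fin n → ℝ) (hr : ∀ j, 0 ≤ r j)
    (v_obs : ℝ) (hv : 0 ≤ v_obs) (d : ℝ) (hd : 0 ≤ d)
    (tstar : ℝ) (htstar : 0 ≤ tstar)
    (p : (Fin n → ℝ) → E)
    (hp : ∀ y : Fin n → ℝ, ‖p y - p q‖ ≤ ∑ j, r j * |y j - q j|)
    (o : ℝ → E)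
    (ho : ∀ s ∈ Set.Icc (0 : ℝ) tstar, ∀ t ∈ Set.Icc (0 : ℝ) tstar,
      ‖o s - o t‖ ≤ v_obs * |s - t|)
    (hinit : d ≤ ‖p q - o 0‖) :
    ∀ t ∈ Set.Icc (0 : ℝ) tstar, ∀ y : Fin n → ℝ,
      (∑ j, r j * |y j - q j|) + v_obs * t ≤ d →
      (d - (∑ j, r j * |y j - q j|) - v_obs * t ≤ ‖p y - o t‖ ∧
        0 ≤ d - (∑ j, r j * |y j - q j|) - v_obs * t) ∧
      ((∑ j, r j * |y j - q j|) + v_obs * t < d → p y ≠ o t) :=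
  dynamic_expanded_bubble_safety_general n q r v_obs d tstar p hp o ho hinit
end

section
/- (Guaranteed safe motion along a chain of dynamic expanded bubbles.) Let E be a real normed vector space, v_obs ≥ 0, and let o : [τ₀, τ_K] → E be a v_obs-Lipschitz obstacle-point trajectory. Let π : [τ₀, τ_K] → ℝⁿ be a robot joint-space trajectory, let τ₀ < τ₁ < … < τ_K be root times with roots q_k = π(τ_k), and let p : ℝⁿ → E give the workspace position of a fixed robot point. Suppose that for every k ∈ {0,…,K−1}: (i) p satisfies the enclosing-radii bound at root q_k with radii r_{k,1},…,r_{k,n} ≥ 0; (ii) ‖p(q_k) − o(τ_k)‖ ≥ d_k for some d_k ≥ 0; and (iii) for all t ∈ [τ_k, τ_{k+1}], the configuration π(t) is in the k-th dynamic expanded bubble at time t − τ_k, i.e. Σⱼ r_{k,j}·|πⱼ(t) − q_{k,j}| + v_obs·(t − τ_k) ≤ d_k. Then for every t ∈ [τ₀, τ_K] one has ‖p(π(t)) − o(t)‖ ≥ 0, and at every time t in a segment where the inequality in (iii) is strict one has p(π(t)) ≠ o(t); i.e., the robot moves safely within the boundaries of the chain of connected dynamic expanded bubbles. -/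
/-!
At a root time `τₖ` the robot point and the obstacle are at distance at least `dₖ`. Until time `t`
the robot point moves by at most `Σⱼ rₖⱼ |πⱼ(t) - qₖⱼ|` (enclosing-radii bound) and the obstacle by at
most `v_obs (t - τₖ)` (speed bound), so by the triangle inequality they cannot meet while this sum
stays below `dₖ`.
-/

section Separation

variable {E : Type*} [SeminormedAddCommGroup E]

theorem ne_of_norm_sub_add_norm_sub_lt {x x₀ y y₀ : E}
    (h : ‖x - x₀‖ + ‖y - y₀‖ < ‖x₀ - y₀‖) : x ≠ y := by
  rintro rfl
  have : ‖x₀ - y₀‖ ≤ ‖x - x₀‖ + ‖x - y₀‖ := by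
    calc ‖x₀ - y₀‖ = ‖-(x - x₀) + (x - y₀)‖ := by congr 1; abel
      _ ≤ ‖x - x₀‖ + ‖x - y₀‖ := (norm_add_le _ _).trans_eq (by rw [norm_neg])
  linarith

theorem ne_of_mem_dynamic_bubble {ι : Type*} [Fintype ι] (p : (ι → ℝ) → E) (o : ℝ → E)
    {q y r : ι → ℝ} {d v s t : ℝ} (hst : s ≤ t)
    (henc : ‖p y - p q‖ ≤ ∑ j, r j * |y j - q j|)
    (hdist : d ≤ ‖p q - o s‖) (ho : ‖o s - o t‖ ≤ v * |s - t|)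
    (hbubble : ∑ j, r j * |y j - q j| + v * (t - s) < d) :
    p y ≠ o t := by
  have hmove : ‖o t - o s‖ ≤ v * (t - s) := by
    rwa [norm_sub_rev, abs_sub_comm, abs_of_nonneg (sub_nonneg.2 hst)] at ho
  exact ne_of_norm_sub_add_norm_sub_lt (x₀ := p q) (y₀ := o s) (by linarith)

end Separation

theorem Fin.Icc_castSucc_succ_subset_Icc_zero_last {K : ℕ} {τ : Fin (K + 1) → ℝ}
    (hτ : Monotone τ) (k : Fin K) :
    Set.Icc (τ k.castSucc) (τ k.succ) ⊆ Set.Icc (τ 0) (τ (Fin.last K)) :=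
  Set.Icc_subset_Icc (hτ (Fin.zero_le _)) (hτ (Fin.le_last _))

theorem safe_motion_chain_of_dynamic_expanded_bubbles_general
    {E : Type*} [NormedAddCommGroup E]
    (n K : ℕ)
    (τ : Fin (K + 1) → ℝ) (hτ : StrictMono τ)
    (v_obs : ℝ)
    (o : ℝ → E)
    (ho : ∀ s ∈ Set.Icc (τ 0) (τ (Fin.last K)), ∀ t ∈ Set.Icc (τ 0) (τ (Fin.last K)),
      ‖o s - o t‖ ≤ v_obs * |s - t|)
    (π : ℝ → Fin n → ℝ)
    (p : (Fin n → ℝ) → E)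
    (r : Fin K → Fin n → ℝ)
    (d : Fin K → ℝ)
    (henc : ∀ k : Fin K, ∀ y : Fin n → ℝ,
      ‖p y - p (π (τ k.castSucc))‖ ≤ ∑ j, r k j * |y j - π (τ k.castSucc) j|)
    (hdist : ∀ k : Fin K, d k ≤ ‖p (π (τ k.castSucc)) - o (τ k.castSucc)‖) :
    (∀ t ∈ Set.Icc (τ 0) (τ (Fin.last K)), 0 ≤ ‖p (π t) - o t‖) ∧
    (∀ k : Fin K, ∀ t ∈ Set.Icc (τ k.castSucc) (τ k.succ),
      (∑ j, r k j * |π t j - π (τ k.castSucc) j|) + v_obs * (t - τ k.castSucc) < d k →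
      p (π t) ≠ o t) := by
  refine ⟨fun t _ ↦ norm_nonneg _, fun k t ht hlt ↦ ?_⟩
  have hsub := Fin.Icc_castSucc_succ_subset_Icc_zero_last hτ.monotone k
  have hroot : τ k.castSucc ∈ Set.Icc (τ k.castSucc) (τ k.succ) :=
    Set.left_mem_Icc.2 (hτ k.castSucc_lt_succ).le
  exact ne_of_mem_dynamic_bubble p o ht.1 (henc k (π t)) (hdist k)
    (ho _ (hsub hroot) _ (hsub ht)) hlt

/-- **Guaranteed safe motion along a chain of dynamic expanded bubbles.**
Given root times `τ 0 < τ 1 < … < τ K` with roots `q_k = π (τ k)`, if on each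
segment `[τ k, τ (k+1)]` the trajectory stays in the `k`-th dynamic expanded
bubble, the enclosing-radii bound holds at each root, and the robot-obstacle
distance at each root time is at least `d k`, then the robot-obstacle
distance is nonnegative throughout, and at every time in a segment where the
bubble inequality is strict there is no collision. -/
theorem safe_motion_chain_of_dynamic_expanded_bubbles
    {E : Type*} [NormedAddCommGroup E] [NormedSpace ℝ E]
    (n K : ℕ) (hn : 0 < n) (hK : 0 < K)
    (τ : Fin (K + 1) → ℝ) (hτ : StrictMono τ)
    (v_obs : ℝ) (hv : 0 ≤ v_obs)
    (o : ℝ → E)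
    (ho : ∀ s ∈ Set.Icc (τ 0) (τ (Fin.last K)), ∀ t ∈ Set.Icc (τ 0) (τ (Fin.last K)),
      ‖o s - o t‖ ≤ v_obs * |s - t|)
    (π : ℝ → Fin n → ℝ)
    (p : (Fin n → ℝ) → E)
    (r : Fin K → Fin n → ℝ) (hr : ∀ k j, 0 ≤ r k j)
    (d : Fin K → ℝ) (hd : ∀ k, 0 ≤ d k)
    (henc : ∀ k : Fin K, ∀ y : Fin n → ℝ,
      ‖p y - p (π (τ k.castSucc))‖ ≤ ∑ j, r k j * |y j - π (τ k.castSucc) j|)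
    (hdist : ∀ k : Fin K, d k ≤ ‖p (π (τ k.castSucc)) - o (τ k.castSucc)‖)
    (hbubble : ∀ k : Fin K, ∀ t ∈ Set.Icc (τ k.castSucc) (τ k.succ),
      (∑ j, r k j * |π t j - π (τ k.castSucc) j|) + v_obs * (t - τ k.castSucc) ≤ d k) :
    (∀ t ∈ Set.Icc (τ 0) (τ (Fin.last K)), 0 ≤ ‖p (π t) - o t‖) ∧
    (∀ k : Fin K, ∀ t ∈ Set.Icc (τ k.castSucc) (τ k.succ),
      (∑ j, r k j * |π t j - π (τ k.castSucc) j|) + v_obs * (t - τ k.castSucc) < d k →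
      p (π t) ≠ o t) :=
  safe_motion_chain_of_dynamic_expanded_bubbles_general n K τ hτ v_obs o ho π p r d henc hdist
end
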